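/- Let n ≥ 4, let C be a totally traceless generalized curvature tensor on Minkowski space ℝ^n, let u be a unit timelike vector such that C is Weyl compatible with u, and let Γ be the associated tensor built from C, its electric part E, u and η. Then every contraction of Γ with u vanishes: Γ(x,y,z,u) = 0 for all vectors x, y, z (and hence, by the symmetries of Γ, the contraction with u in any argument slot vanishes). -/

import Mathlib

open Finset

noncomputable section

/-- A 4-argument real tensor on `ℝ^n`. -/
abbrev Tensor4 (n : ℕ) :=
  (Fin n → ℝ) → (Fin n → ℝ) → (Fin n → ℝ) → (Fin n → ℝ) → ℝ

/-- Components of the Minkowski metric `diag(-1,1,…,1)` of signature `(-,+,…,+)`.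
Since this matrix is its own inverse, it also gives the components `η^{ab}`
of the inverse metric. -/
def ηm {n : ℕ} (a b : Fin n) : ℝ :=
  if a = b then (if (a : ℕ) = 0 then -1 else 1) else 0

/-- The Minkowski bilinear form `η` of signature `(-,+,…,+)` on `ℝ^n`. -/
def ηf {n : ℕ} (x y : Fin n → ℝ) : ℝ :=
  ∑ i : Fin n, (if (i : ℕ) = 0 then (-1 : ℝ) else 1) * x i * y i

/-- The standard basis `(e_a)` of `ℝ^n`. -/
def stdb {n : ℕ} (a : Fin n) : Fin n → ℝ := fun i => if i = a then 1 else 0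

/-- Multilinearity of a 4-argument map. -/
def Multilinear4 {n : ℕ} (C : Tensor4 n) : Prop :=
  (∀ y z w, IsLinearMap ℝ fun x => C x y z w) ∧
  (∀ x z w, IsLinearMap ℝ fun y => C x y z w) ∧
  (∀ x y w, IsLinearMap ℝ fun z => C x y z w) ∧
  (∀ x y z, IsLinearMap ℝ fun w => C x y z w)

/-- Bilinearity of a 2-argument map. -/
def Bilinear2 {n : ℕ} (S : (Fin n → ℝ) → (Fin n → ℝ) → ℝ) : Prop :=
  (∀ y, IsLinearMap ℝ fun x => S x y) ∧ (∀ x, IsLinearMap ℝ fun y => S x y)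

/-- A generalized curvature tensor: a multilinear map with the algebraic
symmetries of the Riemann tensor (antisymmetry in the first and the last pair,
pair-exchange symmetry, and the first Bianchi identity). -/
def IsGenCurv {n : ℕ} (C : Tensor4 n) : Prop :=
  Multilinear4 C ∧
  (∀ x y z w, C x y z w = - C y x z w) ∧
  (∀ x y z w, C x y z w = - C x y w z) ∧
  (∀ x y z w, C x y z w = C z w x y) ∧
  (∀ x y z w, C x y z w + C y z x w + C z x y w = 0)

/-- Total tracelessness: `Σ_{a,b} η^{ab} C(e_a, x, e_b, y) = 0`. -/
def TotallyTraceless {n : ℕ} (C : Tensor4 n) : Prop :=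
  ∀ x y, (∑ a, ∑ b, ηm a b * C (stdb a) x (stdb b) y) = 0

/-- Weyl compatibility of `C` with the vector `u`. -/
def WeylCompatible {n : ℕ} (C : Tensor4 n) (u : Fin n → ℝ) : Prop :=
  ∀ x y z w,
    ηf u x * C y z w u + ηf u y * C z x w u + ηf u z * C x y w u = 0

/-- The electric part of `C` relative to `u`: `E(x,y) = C(u,x,y,u)`. -/
def electric {n : ℕ} (C : Tensor4 n) (u : Fin n → ℝ)
    (x y : Fin n → ℝ) : ℝ :=
  C u x y u

/-- Full η-self-contraction `T² = Σ T_{abcd} T^{abcd}` of a 4-tensor. -/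
def sq4 {n : ℕ} (T : Tensor4 n) : ℝ :=
  ∑ a, ∑ a', ∑ b, ∑ b', ∑ c, ∑ c', ∑ d, ∑ d',
    ηm a a' * ηm b b' * ηm c c' * ηm d d' *
      T (stdb a) (stdb b) (stdb c) (stdb d) *
      T (stdb a') (stdb b') (stdb c') (stdb d')

/-- Full η-self-contraction `S² = Σ S_{ab} S^{ab}` of a 2-tensor. -/
def sq2 {n : ℕ} (S : (Fin n → ℝ) → (Fin n → ℝ) → ℝ) : ℝ :=
  ∑ a, ∑ a', ∑ b, ∑ b',
    ηm a a' * ηm b b' * S (stdb a) (stdb b) * S (stdb a') (stdb b')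

/-- The tensor `Γ` associated with `C`, its electric part `E`, `u` and `η`. -/
def Γt {n : ℕ} (C : Tensor4 n) (u : Fin n → ℝ) : Tensor4 n :=
  fun x y z w =>
    C x y z w
      - ((n : ℝ) - 2) / ((n : ℝ) - 3) *
          (ηf u x * ηf u w * electric C u y z - ηf u y * ηf u w * electric C u x z
            - ηf u x * ηf u z * electric C u y w + ηf u y * ηf u z * electric C u x w)
      - 1 / ((n : ℝ) - 3) *
          (ηf x w * electric C u y z - ηf y w * electric C u x z
            - ηf x z * electric C u y w + ηf y z * electric C u x w)

/-! Contracting `Γ` with `u` in the last slot kills the terms containing `E(·, u) = C(u, ·, u, u) = 0`,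
and because `η(u, u) = -1` the coefficients `(n-2)/(n-3)` and `1/(n-3)` of the two surviving terms
combine to `1`. What is left, `C(x,y,z,u) + η(u,x) E(y,z) - η(u,y) E(x,z)`, is Weyl compatibility
with `u` substituted into its third slot. -/

theorem ηf_comm {n : ℕ} (x y : Fin n → ℝ) : ηf x y = ηf y x := by
  simp only [ηf, mul_right_comm]

section Antisymmetric

variable {n : ℕ} {C : Tensor4 n}

theorem electric_apply_self_right (hC : ∀ x y z w, C x y z w = -C x y w z)
    (u x : Fin n → ℝ) : electric C u x u = 0 := by
  have := hC u x u u
  simp only [electric]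
  linarith

theorem WeylCompatible.apply_eq_electric (hC : ∀ x y z w, C x y z w = -C y x z w)
    {u : Fin n → ℝ} (hu : ηf u u = -1) (hW : WeylCompatible C u) (x y z : Fin n → ℝ) :
    C x y z u = ηf u y * electric C u x z - ηf u x * electric C u y z := by
  have hWu := hW x y u z
  rw [hu, hC y u z u] at hWu
  simp only [electric]
  linarith

theorem Γt_apply_right (hC : ∀ x y z w, C x y z w = -C x y w z) (hn : (n : ℝ) ≠ 3)
    {u : Fin n → ℝ} (hu : ηf u u = -1) (x y z : Fin n → ℝ) :
    Γt C u x y z u = C x y z u + ηf u x * electric C u y z - ηf u y * electric C u x z := by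
  have hn3 : (n : ℝ) - 3 ≠ 0 := sub_ne_zero.mpr hn
  simp only [Γt]
  rw [electric_apply_self_right hC, electric_apply_self_right hC, hu, ηf_comm x u, ηf_comm y u]
  field_simp
  ring

end Antisymmetric

theorem stmt_10_general {n : ℕ} (hn : 4 ≤ n) (C : Tensor4 n)
    (hC : IsGenCurv C)
    (u : Fin n → ℝ) (hu : ηf u u = -1) (hW : WeylCompatible C u) :
    ∀ x y z, Γt C u x y z u = 0 := by
  obtain ⟨-, hanti₁, hanti₂, -, -⟩ := hC
  have hn3 : (n : ℝ) ≠ 3 := by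
    norm_cast
    omega
  intro x y z
  rw [Γt_apply_right hanti₂ hn3 hu, hW.apply_eq_electric hanti₁ hu]
  ring

/-- for `n ≥ 4`, a totally traceless generalized curvature tensor
`C` on Minkowski `ℝ^n` Weyl compatible with a unit timelike `u`, every
contraction of the associated tensor `Γ` with `u` vanishes. -/
theorem stmt_10 {n : ℕ} (hn : 4 ≤ n) (C : Tensor4 n)
    (hC : IsGenCurv C) (htr : TotallyTraceless C)
    (u : Fin n → ℝ) (hu : ηf u u = -1) (hW : WeylCompatible C u) :
    ∀ x y z, Γt C u x y z u = 0 :=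
  stmt_10_general hn C hC u hu hW
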